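/- arXiv:1101.3792 — 5 statements merged into one kernel-verified Lean document; each statement's English description precedes it below -/
import Mathlib

section
/- The class K has the joint embedding property: for all D₁, D₂ ∈ K there exist E ∈ K and embeddings of D₁ and D₂ into E. -/
/-!
Glue the two structures along their `P`-parts inside `M₀`: the `P`-part of the joint structure
is the union of the images of the two `P`-parts in `M₀`, with the `Rₙ` read off `M₀`, while the
`Q`-parts are kept disjoint and the `L`-relations are the union of those of the pieces. Every
`L`-relation other than `P` involves a `Q`-element, which pins it to a single piece, so each piece
embeds. An `n`-pair is likewise pinned to one piece: its `Q`-elements form an `H`-cycle, and each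
`aᵢ` is tied to `c₀` by `S(aᵢ, c₀, aᵢ, c₀)`. Hence it is the image of an `n`-pair of that piece,
which labels an `Rₙ`-tuple there.
-/

universe u

open FirstOrder FirstOrder.Language FirstOrder.Language.Structure CategoryTheory

namespace Ivanov

/-- The relation symbols of the finite language `L`:
four unary symbols `P`, `Q`, `λ`, `ρ`, a binary `H` and a 4-ary `S`. -/
inductive LRel : ℕ → Type
  | P : LRel 1
  | Q : LRel 1
  | lam : LRel 1
  | rho : LRel 1
  | H : LRel 2
  | S : LRel 4

/-- The finite language `L`. -/
def L : Language := ⟨fun _ => Empty, LRel⟩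

/-- The relational language having a relation symbol `Rₙ` of arity `ar n` for each
index `n ∈ s` with `0 < n`. -/
def L0r (ar : ℕ → ℕ) (s : Set ℕ) : Language :=
  ⟨fun _ => Empty, fun k => {n : ℕ // 0 < n ∧ n ∈ s ∧ ar n = k}⟩

/-- The relation symbol `Rₙ`. -/
def R (ar : ℕ → ℕ) (s : Set ℕ) (n : ℕ) (h1 : 0 < n) (h2 : n ∈ s) :
    (L0r ar s).Relations (ar n) := ⟨n, h1, h2, rfl⟩

/-- The language `L ∪ L₀`. -/
def LFull (ar : ℕ → ℕ) (s : Set ℕ) : Language := L.sum (L0r ar s)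

instance (ar : ℕ → ℕ) (s : Set ℕ) (n : ℕ) : IsEmpty ((LFull ar s).Functions n) :=
  ⟨fun f => Sum.elim Empty.elim Empty.elim f⟩

instance (ar : ℕ → ℕ) (s : Set ℕ) (n : ℕ) : IsEmpty ((L0r ar s).Functions n) :=
  ⟨fun f => Empty.elim f⟩

section

variable (ar : ℕ → ℕ) (s : Set ℕ) {M : Type u} [(LFull ar s).Structure M]

/-- `x` satisfies the unary predicate `P`. -/
def isP (x : M) : Prop := RelMap (L := LFull ar s) (n := 1) (Sum.inl LRel.P) ![x]

/-- `x` satisfies the unary predicate `Q`. -/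
def isQ (x : M) : Prop := RelMap (L := LFull ar s) (n := 1) (Sum.inl LRel.Q) ![x]

/-- `x` satisfies the unary predicate `λ`. -/
def isLam (x : M) : Prop := RelMap (L := LFull ar s) (n := 1) (Sum.inl LRel.lam) ![x]

/-- `x` satisfies the unary predicate `ρ`. -/
def isRho (x : M) : Prop := RelMap (L := LFull ar s) (n := 1) (Sum.inl LRel.rho) ![x]

/-- the binary predicate `H`. -/
def isH (x y : M) : Prop := RelMap (L := LFull ar s) (n := 2) (Sum.inl LRel.H) ![x, y]

/-- the 4-ary predicate `S`. -/
def isS (x y z w : M) : Prop := RelMap (L := LFull ar s) (n := 4) (Sum.inl LRel.S) ![x, y, z, w]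

/-- The basic conditions on the `(L ∪ L₀)`-structures under consideration: `P` and `Q`
partition the universe, `λ`, `ρ`, `H` hold only on `Q`, the `Rₙ` hold only on tuples from `P`,
and `S(a,b,c,d)` implies `a, c ∈ P`, `b, d ∈ Q`. -/
structure IsGood (M : Type u) [(LFull ar s).Structure M] : Prop where
  part : ∀ x : M, isP ar s x ∨ isQ ar s x
  not_both : ∀ x : M, ¬(isP ar s x ∧ isQ ar s x)
  lam_q : ∀ x : M, isLam ar s x → isQ ar s x
  rho_q : ∀ x : M, isRho ar s x → isQ ar s x
  h_q : ∀ x y : M, isH ar s x y → isQ ar s x ∧ isQ ar s y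
  r_p : ∀ (k : ℕ) (r : (L0r ar s).Relations k) (t : Fin k → M),
    RelMap (L := LFull ar s) (n := k) (Sum.inr r) t → ∀ i, isP ar s (t i)
  s_pq : ∀ x y z w : M, isS ar s x y z w →
    isP ar s x ∧ isQ ar s y ∧ isP ar s z ∧ isQ ar s w

/-- `(a, c)` is an `n`-pair of arity `m` (labelling the tuple `a`). -/
structure IsNPair {M : Type u} [(LFull ar s).Structure M] (n m : ℕ)
    (a : Fin m → M) (c : Fin n → M) : Prop where
  le : m ≤ n
  aP : ∀ i, isP ar s (a i)
  cQ : ∀ j, isQ ar s (c j)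
  inj : Function.Injective c
  hH : ∀ i j : Fin n, isH ar s (c i) (c j) ↔ (j : ℕ) = ((i : ℕ) + 1) % n
  hlam : ∀ i : Fin n, isLam ar s (c i) ↔ (i : ℕ) = 0
  hrho : ∀ i : Fin n, isRho ar s (c i) ↔ (i : ℕ) = m - 1
  hS : ∀ (i k : Fin m) (j l : Fin n),
    isS ar s (a i) (c j) (a k) (c l) ↔ a i = a k

/-- The induced structure on a subset of a structure in a relational language. -/
def inducedStr (A : Set M) : (LFull ar s).Structure A where
  funMap := fun {_} f _ => isEmptyElim f
  RelMap := fun {_} r t => RelMap r fun i => (t i : M)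

end

/-- The `P`-part of a structure. -/
abbrev Ppart (ar : ℕ → ℕ) (s : Set ℕ) (M : Type u) [(LFull ar s).Structure M] : Type u :=
  {x : M // isP ar s x}

/-- The `L₀`-structure induced on the `P`-part by the relations `Rₙ`. -/
instance PpartStr (ar : ℕ → ℕ) (s : Set ℕ) (M : Type u) [(LFull ar s).Structure M] :
    (L0r ar s).Structure (Ppart ar s M) where
  funMap := fun {_} f _ => isEmptyElim f
  RelMap := fun {_} r t => RelMap (L := LFull ar s) (Sum.inr r) fun i => (t i : M)

/-- The class `K` of all finite `(L ∪ L₀)`-structures `D` satisfying the basic conditions,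
whose `P`-part is isomorphic to a substructure of `M₀`, and in which, for every `n`, every
`n`-pair whose arity equals the arity of `Rₙ` labels a tuple satisfying `Rₙ`. -/
def Kclass (ar : ℕ → ℕ) (s : Set ℕ) (M₀ : Type u) [(L0r ar s).Structure M₀] :
    Set (Bundled.{u} (LFull ar s).Structure) :=
  {D | Finite D ∧ IsGood ar s D ∧
    Nonempty (Ppart ar s D ↪[L0r ar s] M₀) ∧
    ∀ (n : ℕ) (h1 : 0 < n) (h2 : n ∈ s) (a : Fin (ar n) → D) (c : Fin n → D),
      IsNPair ar s n (ar n) a c →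
        RelMap (L := LFull ar s) (n := ar n) (Sum.inr (R ar s n h1 h2)) a}

section Embedding

variable {ar : ℕ → ℕ} {s : Set ℕ} {M N : Type u} [(LFull ar s).Structure M]
  [(LFull ar s).Structure N] (φ : M ↪[LFull ar s] N)

lemma relMap_finVecMap_embedding {k : ℕ} (r : (LFull ar s).Relations k) (t : Fin k → M) :
    RelMap r (FinVec.map φ t) ↔ RelMap r t := by
  rw [FinVec.map_eq]; exact φ.map_rel r t

lemma isP_embedding_iff (x : M) : isP ar s (φ x) ↔ isP ar s x :=
  relMap_finVecMap_embedding φ _ ![x]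

lemma isQ_embedding_iff (x : M) : isQ ar s (φ x) ↔ isQ ar s x :=
  relMap_finVecMap_embedding φ _ ![x]

lemma isLam_embedding_iff (x : M) : isLam ar s (φ x) ↔ isLam ar s x :=
  relMap_finVecMap_embedding φ _ ![x]

lemma isRho_embedding_iff (x : M) : isRho ar s (φ x) ↔ isRho ar s x :=
  relMap_finVecMap_embedding φ _ ![x]

lemma isH_embedding_iff (x y : M) : isH ar s (φ x) (φ y) ↔ isH ar s x y :=
  relMap_finVecMap_embedding φ _ ![x, y]

lemma isS_embedding_iff (x y z w : M) :
    isS ar s (φ x) (φ y) (φ z) (φ w) ↔ isS ar s x y z w :=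
  relMap_finVecMap_embedding φ _ ![x, y, z, w]

lemma IsNPair.of_comp_embedding {n m : ℕ} {a : Fin m → M} {c : Fin n → M}
    (h : IsNPair ar s n m (φ ∘ a) (φ ∘ c)) : IsNPair ar s n m a c where
  le := h.le
  aP i := (isP_embedding_iff φ _).1 (h.aP i)
  cQ j := (isQ_embedding_iff φ _).1 (h.cQ j)
  inj := h.inj.of_comp
  hH i j := (isH_embedding_iff φ _ _).symm.trans (h.hH i j)
  hlam i := (isLam_embedding_iff φ _).symm.trans (h.hlam i)
  hrho i := (isRho_embedding_iff φ _).symm.trans (h.hrho i)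
  hS i k j l := (isS_embedding_iff φ _ _ _ _).symm.trans ((h.hS i k j l).trans φ.injective.eq_iff)

end Embedding

/-- On tuples from the `P`-part, the only `L`-relation that can hold is `P` itself. -/
lemma IsGood.relMap_inl_of_forall_isP {ar : ℕ → ℕ} {s : Set ℕ} {M N : Type u}
    [(LFull ar s).Structure M] [(LFull ar s).Structure N] (hM : IsGood ar s M) {k : ℕ}
    {r : LRel k} {t : Fin k → M} (hr : RelMap (L := LFull ar s) (Sum.inl r) t)
    (ht : ∀ m, isP ar s (t m)) {t' : Fin k → N} (ht' : ∀ m, isP ar s (t' m)) :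
    RelMap (L := LFull ar s) (Sum.inl r) t' := by
  rw [← FinVec.etaExpand_eq t] at hr
  rw [← FinVec.etaExpand_eq t']
  cases r
  · exact ht' 0
  · exact absurd ⟨ht 0, hr⟩ (hM.not_both _)
  · exact absurd ⟨ht 0, hM.lam_q _ hr⟩ (hM.not_both _)
  · exact absurd ⟨ht 0, hM.rho_q _ hr⟩ (hM.not_both _)
  · exact absurd ⟨ht 0, (hM.h_q _ _ hr).1⟩ (hM.not_both _)
  · exact absurd ⟨ht 1, (hM.s_pq _ _ _ _ hr).2.1⟩ (hM.not_both _)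

lemma IsGood.isQ_iff_not_isP {ar : ℕ → ℕ} {s : Set ℕ} {M : Type u} [(LFull ar s).Structure M]
    (hM : IsGood ar s M) (x : M) : isQ ar s x ↔ ¬ isP ar s x :=
  ⟨fun hq hp => hM.not_both x ⟨hp, hq⟩, (hM.part x).resolve_left⟩

section Gluing

variable {ar : ℕ → ℕ} {s : Set ℕ} {M₀ : Type u} [(L0r ar s).Structure M₀] {ι : Type}
  {D : ι → Bundled.{u} (LFull ar s).Structure} (f : ∀ i, Ppart ar s (D i) ↪[L0r ar s] M₀)

abbrev Joint : Type u := ↥(⋃ i, Set.range (f i)) ⊕ Σ i, {x : D i // ¬ isP ar s x}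

namespace Joint

open Classical in
noncomputable def incl (i : ι) (x : D i) : Joint f :=
  if h : isP ar s x then Sum.inl ⟨f i ⟨x, h⟩, Set.mem_iUnion_of_mem i (Set.mem_range_self _)⟩
  else Sum.inr ⟨i, x, h⟩

instance : (LFull ar s).Structure (Joint f) where
  funMap F := isEmptyElim F
  RelMap
    | Sum.inl r, t =>
        ∃ i, ∃ t' : Fin _ → D i, RelMap (L := LFull ar s) (Sum.inl r) t' ∧ incl f i ∘ t' = t
    | Sum.inr r, t =>
        ∃ p : Fin _ → ↥(⋃ i, Set.range (f i)), Sum.inl ∘ p = t ∧ RelMap r (Subtype.val ∘ p)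

variable {f}

lemma incl_of_isP {i : ι} {x : D i} (h : isP ar s x) :
    incl f i x = Sum.inl ⟨f i ⟨x, h⟩, Set.mem_iUnion_of_mem i (Set.mem_range_self _)⟩ :=
  dif_pos h

lemma incl_of_not_isP {i : ι} {x : D i} (h : ¬ isP ar s x) : incl f i x = Sum.inr ⟨i, x, h⟩ :=
  dif_neg h

lemma isLeft_incl_iff {i : ι} {x : D i} : (incl f i x).isLeft ↔ isP ar s x := by
  by_cases h : isP ar s x
  · simp [incl_of_isP h, h]
  · simp [incl_of_not_isP h, h]

lemma incl_injective (i : ι) : Function.Injective (incl f i) := by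
  intro x y hxy
  by_cases hx : isP ar s x <;> by_cases hy : isP ar s y
  · rw [incl_of_isP hx, incl_of_isP hy, Sum.inl.injEq, Subtype.mk.injEq] at hxy
    exact congrArg Subtype.val ((f i).injective hxy)
  · simp [incl_of_isP hx, incl_of_not_isP hy] at hxy
  · simp [incl_of_not_isP hx, incl_of_isP hy] at hxy
  · rw [incl_of_not_isP hx, incl_of_not_isP hy, Sum.inr.injEq, Sigma.mk.injEq] at hxy
    exact congrArg Subtype.val (eq_of_heq hxy.2)

lemma isP_iff_of_incl_eq_incl {i j : ι} {x : D i} {y : D j} (h : incl f j y = incl f i x) :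
    isP ar s y ↔ isP ar s x := by
  rw [← isLeft_incl_iff (f := f), h, isLeft_incl_iff]

lemma eq_of_incl_eq_incl {i j : ι} {x : D i} {y : D j} (h : incl f j y = incl f i x)
    (hy : ¬ isP ar s y) : j = i := by
  have hx : ¬ isP ar s x := (isP_iff_of_incl_eq_incl h).not.1 hy
  rw [incl_of_not_isP hy, incl_of_not_isP hx, Sum.inr.injEq] at h
  exact congrArg Sigma.fst h

lemma exists_eq_incl (x : Joint f) : ∃ i y, x = incl f i y := by
  rcases x with ⟨p, hp⟩ | ⟨i, y, hy⟩
  · obtain ⟨i, u, rfl⟩ := Set.mem_iUnion.1 hp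
    exact ⟨i, u, (incl_of_isP u.2).symm⟩
  · exact ⟨i, y, (incl_of_not_isP hy).symm⟩

lemma exists_relMap_eq_incl_comp {k : ℕ} {r : LRel k} {t : Fin k → Joint f}
    (hr : RelMap (L := LFull ar s) (Sum.inl r) t) {m : Fin k} {i : ι} {x : D i}
    (hx : ¬ isP ar s x) (hm : t m = incl f i x) :
    ∃ t' : Fin k → D i, RelMap (L := LFull ar s) (Sum.inl r) t' ∧ incl f i ∘ t' = t := by
  obtain ⟨j, t', hr', rfl⟩ := hr
  have hm' : ¬ isP ar s (t' m) := (isP_iff_of_incl_eq_incl hm).not.2 hx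
  obtain rfl := eq_of_incl_eq_incl hm hm'
  exact ⟨t', hr', rfl⟩

lemma relMap_incl_comp_iff (hD : ∀ i, IsGood ar s (D i)) {i : ι} {k : ℕ}
    (r : (LFull ar s).Relations k) (t : Fin k → D i) :
    RelMap r (incl f i ∘ t) ↔ RelMap r t := by
  rcases r with r | r
  · refine ⟨fun ⟨j, t', hr, he⟩ => ?_, fun h => ⟨i, t, h, rfl⟩⟩
    by_cases hP : ∀ m, isP ar s (t' m)
    · exact (hD j).relMap_inl_of_forall_isP hr hP
        fun m => (isP_iff_of_incl_eq_incl (congrFun he m)).1 (hP m)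
    · push Not at hP
      obtain ⟨m, hm⟩ := hP
      obtain rfl := eq_of_incl_eq_incl (congrFun he m) hm
      rwa [← (incl_injective j).comp_left he]
  · constructor
    · rintro ⟨p, hp, hr⟩
      have hP (m) : isP ar s (t m) := by
        rw [← isLeft_incl_iff (f := f), ← Function.comp_apply (f := incl f i), ← hp]; rfl
      have hpf : Subtype.val ∘ p = f i ∘ fun m => ⟨t m, hP m⟩ := by
        ext m
        exact congrArg Subtype.val (Sum.inl_injective ((congrFun hp m).trans (incl_of_isP (hP m))))
      rw [hpf] at hr
      exact ((f i).map_rel r _).1 hr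
    · intro hr
      have hP := (hD i).r_p _ r t hr
      exact ⟨fun m => _, funext fun m => (incl_of_isP (hP m)).symm, ((f i).map_rel r _).2 hr⟩

noncomputable def inclEmbedding (hD : ∀ i, IsGood ar s (D i)) (i : ι) :
    D i ↪[LFull ar s] Joint f where
  toFun := incl f i
  inj' := incl_injective i
  map_fun' F := isEmptyElim F
  map_rel' := relMap_incl_comp_iff hD

lemma isP_iff_isLeft (hD : ∀ i, IsGood ar s (D i)) (x : Joint f) : isP ar s x ↔ x.isLeft := by
  obtain ⟨i, y, rfl⟩ := exists_eq_incl x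
  exact (isP_embedding_iff (inclEmbedding hD i) y).trans isLeft_incl_iff.symm

lemma isQ_iff_isRight (hD : ∀ i, IsGood ar s (D i)) (x : Joint f) : isQ ar s x ↔ x.isRight := by
  obtain ⟨i, y, rfl⟩ := exists_eq_incl x
  rw [← Sum.not_isLeft, isLeft_incl_iff, ← (hD i).isQ_iff_not_isP]
  exact isQ_embedding_iff (inclEmbedding hD i) y

lemma not_isP_of_isQ_incl (hD : ∀ i, IsGood ar s (D i)) {i : ι} {y : D i}
    (h : isQ ar s (incl f i y)) : ¬ isP ar s y :=
  ((hD i).isQ_iff_not_isP y).1 ((isQ_embedding_iff (inclEmbedding hD i) y).1 h)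

lemma isGood (hD : ∀ i, IsGood ar s (D i)) : IsGood ar s (Joint f) where
  part x := by rw [isP_iff_isLeft hD, isQ_iff_isRight hD]; cases x <;> simp
  not_both x := by rw [isP_iff_isLeft hD, isQ_iff_isRight hD]; cases x <;> simp
  lam_q x hx := by
    obtain ⟨i, y, rfl⟩ := exists_eq_incl x
    have := (hD i).lam_q y ((isLam_embedding_iff (inclEmbedding hD i) y).1 hx)
    exact (isQ_embedding_iff (inclEmbedding hD i) y).2 this
  rho_q x hx := by
    obtain ⟨i, y, rfl⟩ := exists_eq_incl x
    have := (hD i).rho_q y ((isRho_embedding_iff (inclEmbedding hD i) y).1 hx)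
    exact (isQ_embedding_iff (inclEmbedding hD i) y).2 this
  h_q x y hxy := by
    obtain ⟨i, t, ht, he⟩ := hxy
    obtain rfl : incl f i (t 0) = x := congrFun he 0
    obtain rfl : incl f i (t 1) = y := congrFun he 1
    rw [← FinVec.etaExpand_eq t] at ht
    obtain ⟨h0, h1⟩ := (hD i).h_q _ _ ht
    exact ⟨(isQ_embedding_iff (inclEmbedding hD i) _).2 h0,
      (isQ_embedding_iff (inclEmbedding hD i) _).2 h1⟩
  r_p _ _ t ht m := by
    obtain ⟨p, rfl, -⟩ := ht
    exact (isP_iff_isLeft hD _).2 rfl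
  s_pq x y z w hS := by
    obtain ⟨i, t, ht, he⟩ := hS
    obtain rfl : incl f i (t 0) = x := congrFun he 0
    obtain rfl : incl f i (t 1) = y := congrFun he 1
    obtain rfl : incl f i (t 2) = z := congrFun he 2
    obtain rfl : incl f i (t 3) = w := congrFun he 3
    rw [← FinVec.etaExpand_eq t] at ht
    obtain ⟨h0, h1, h2, h3⟩ := (hD i).s_pq _ _ _ _ ht
    exact ⟨(isP_embedding_iff (inclEmbedding hD i) _).2 h0,
      (isQ_embedding_iff (inclEmbedding hD i) _).2 h1,
      (isP_embedding_iff (inclEmbedding hD i) _).2 h2,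
      (isQ_embedding_iff (inclEmbedding hD i) _).2 h3⟩

instance [Finite ι] [∀ i, Finite (D i)] : Finite (Joint f) :=
  have : Finite ↥(⋃ i, Set.range (f i)) :=
    (Set.finite_iUnion fun _ => Set.finite_range _).to_subtype
  inferInstance

noncomputable def ppartEmbedding (hD : ∀ i, IsGood ar s (D i)) :
    Ppart ar s (Joint f) ↪[L0r ar s] M₀ where
  toFun x := (x.1.getLeft ((isP_iff_isLeft hD _).1 x.2)).1
  inj' x y h := Subtype.ext <| by
    rw [← Sum.inl_getLeft x.1 ((isP_iff_isLeft hD _).1 x.2),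
      ← Sum.inl_getLeft y.1 ((isP_iff_isLeft hD _).1 y.2), Subtype.ext h]
  map_fun' F := isEmptyElim F
  map_rel' r t := by
    refine ⟨fun h => ⟨_, funext fun m => Sum.inl_getLeft _ _, h⟩, fun ⟨p, hp, h⟩ => ?_⟩
    convert h using 2
    funext m
    exact congrArg Subtype.val ((Sum.getLeft_eq_iff _).2 (congrFun hp m).symm)

lemma exists_incl_comp_of_isNPair (hD : ∀ i, IsGood ar s (D i)) {n m : ℕ} (hn : 0 < n)
    {a : Fin m → Joint f} {c : Fin n → Joint f} (hp : IsNPair ar s n m a c) :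
    ∃ i, ∃ (a' : Fin m → D i) (c' : Fin n → D i), incl f i ∘ a' = a ∧ incl f i ∘ c' = c := by
  obtain ⟨⟨i, x, hx⟩, hc₀⟩ := Sum.isRight_iff.1 ((isQ_iff_isRight hD _).1 (hp.cQ ⟨0, hn⟩))
  have hc (k : ℕ) (hk : k < n) : ∃ y : D i, c ⟨k, hk⟩ = incl f i y := by
    induction k with
    | zero => exact ⟨x, hc₀.trans (incl_of_not_isP hx).symm⟩
    | succ k ih =>
      obtain ⟨y, hy⟩ := ih (by omega)
      have hH := (hp.hH ⟨k, by omega⟩ ⟨k + 1, hk⟩).2 (Nat.mod_eq_of_lt hk).symm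
      obtain ⟨t, -, ht⟩ := exists_relMap_eq_incl_comp (m := 0) hH
        (not_isP_of_isQ_incl hD (hy ▸ hp.cQ _)) hy
      exact ⟨t 1, (congrFun ht 1).symm⟩
  choose c' hc' using fun j : Fin n => hc j j.2
  simp only [Fin.eta] at hc'
  have ha (k : Fin m) : ∃ y : D i, a k = incl f i y := by
    have hS := (hp.hS k k ⟨0, hn⟩ ⟨0, hn⟩).2 rfl
    obtain ⟨t, -, ht⟩ := exists_relMap_eq_incl_comp (m := 1) hS
      (not_isP_of_isQ_incl hD (hc' _ ▸ hp.cQ _)) (hc' ⟨0, hn⟩)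
    exact ⟨t 0, (congrFun ht 0).symm⟩
  choose a' ha' using ha
  exact ⟨i, a', c', funext fun k => (ha' k).symm, funext fun j => (hc' j).symm⟩

end Joint

end Gluing

lemma Kclass.exists_joint_embedding {ar : ℕ → ℕ} {s : Set ℕ} {M₀ : Type u}
    [(L0r ar s).Structure M₀] {ι : Type} [Finite ι] (D : ι → Bundled.{u} (LFull ar s).Structure)
    (hD : ∀ i, D i ∈ Kclass ar s M₀) :
    ∃ E ∈ Kclass ar s M₀, ∀ i, Nonempty (D i ↪[LFull ar s] E) := by
  choose hfin hgood hemb hlabel using hD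
  let f i := (hemb i).some
  refine ⟨⟨Joint f, inferInstance⟩, ⟨inferInstance, Joint.isGood hgood,
    ⟨Joint.ppartEmbedding hgood⟩, ?_⟩, fun i => ⟨Joint.inclEmbedding hgood i⟩⟩
  intro n hn hs a c hp
  obtain ⟨i, a', c', rfl, rfl⟩ := Joint.exists_incl_comp_of_isNPair hgood hn hp
  have hp' := hp.of_comp_embedding (Joint.inclEmbedding hgood i)
  exact ((Joint.inclEmbedding hgood i).map_rel _ a').2 (hlabel i n hn hs a' c' hp')

theorem statement_2_general
    (ar : ℕ → ℕ)
    (M₀ : Type u) [(L0r ar Set.univ).Structure M₀] :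
    JointEmbedding (Kclass ar Set.univ M₀) := by
  intro D₁ h₁ D₂ h₂
  obtain ⟨E, hE, hemb⟩ :=
    Kclass.exists_joint_embedding ![D₁, D₂] (Fin.forall_fin_two.2 ⟨h₁, h₂⟩)
  exact ⟨E, hE, hemb 0, hemb 1⟩

/-- The class `K` has the joint embedding property. -/
theorem statement_2
    (ar : ℕ → ℕ)
    (har_le : ∀ n : ℕ, 0 < n → ar n ≤ n)
    (har_mono : ∀ m n : ℕ, 0 < m → m ≤ n → ar m ≤ ar n)
    (M₀ : Type u) [(L0r ar Set.univ).Structure M₀] [Countable M₀] [Infinite M₀]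
    (hcat : Cardinal.Categorical (ℵ₀ : Cardinal.{u}) ((L0r ar Set.univ).completeTheory M₀))
    (hqe : ∀ (k : ℕ) (φ : (L0r ar Set.univ).Formula (Fin k)),
      ∃ ψ : (L0r ar Set.univ).Formula (Fin k), ψ.IsQF ∧
        ∀ a : Fin k → M₀, φ.Realize a ↔ ψ.Realize a)
    (hcomplete : ∀ (n : ℕ) (h1 : 0 < n) (a b : Fin (ar n) → M₀),
      RelMap (R ar Set.univ n h1 (Set.mem_univ n)) a →
        RelMap (R ar Set.univ n h1 (Set.mem_univ n)) b →
        ∀ φ : (L0r ar Set.univ).Formula (Fin (ar n)), φ.Realize a ↔ φ.Realize b) :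
    JointEmbedding (Kclass ar Set.univ M₀) :=
  statement_2_general ar M₀

end Ivanov
end

section
/- If ā and b̄ are finite tuples of elements of P(U) that realize the same complete L₀-type in the L₀-structure induced on P(U) (which is isomorphic to M₀), then there exists an automorphism of U mapping ā to b̄. Consequently the image of the restriction homomorphism Aut(U) → Aut(P(U)) is dense: for every automorphism σ of the L₀-structure P(U) and every finite tuple ā from P(U) there is an automorphism τ of U with τ(a) = σ(a) for every coordinate a of ā. -/
/-!
Every symbol of `L` other than `P` forces one of its arguments into `Q`, and `P`, `Q` are disjoint
in every finite substructure of `U` (these lie in `K`). Hence on tuples from `P(U)` the relations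
of `L` are constant, and two such tuples with the same `L₀`-type have the same quantifier-free
`(L ∪ L₀)`-type. The map `aᵢ ↦ bᵢ` is then an embedding of the finite substructure spanned by `ā`,
which ultrahomogeneity extends to an automorphism of `U`. Density follows by taking `b̄ = σ(ā)`.
-/

universe u

open FirstOrder FirstOrder.Language FirstOrder.Language.Structure CategoryTheory

namespace FirstOrder.Language

variable {L : Language} {M : Type*} [L.Structure M]

theorem eq_iff_eq_of_realize_iff {k : ℕ} {a b : Fin k → M}
    (h : ∀ φ : L.Formula (Fin k), φ.Realize a ↔ φ.Realize b) (i j : Fin k) :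
    a i = a j ↔ b i = b j := by
  simpa using h ((Term.var i).equal (Term.var j))

theorem relMap_comp_iff_of_realize_iff {k : ℕ} {a b : Fin k → M}
    (h : ∀ φ : L.Formula (Fin k), φ.Realize a ↔ φ.Realize b)
    {n : ℕ} (r : L.Relations n) (t : Fin n → Fin k) :
    RelMap r (a ∘ t) ↔ RelMap r (b ∘ t) := by
  simpa [Formula.realize_rel, Function.comp_def] using h (r.formula fun i => Term.var (t i))

theorem IsUltrahomogeneous.exists_equiv_apply_eq [L.IsRelational]
    (hM : L.IsUltrahomogeneous M) {k : ℕ} {a b : Fin k → M} (heq : ∀ i j, a i = a j ↔ b i = b j)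
    (hrel : ∀ {n : ℕ} (r : L.Relations n) (t : Fin n → Fin k),
      RelMap r (a ∘ t) ↔ RelMap r (b ∘ t)) :
    ∃ τ : M ≃[L] M, ∀ i, τ (a i) = b i := by
  let S := Substructure.closure L (Set.range a)
  have mem_range : ∀ x : S, (x : M) ∈ Set.range a := fun x =>
    (Substructure.mem_closure_iff_of_isRelational L _ _).1 x.2
  let idx : S → Fin k := fun x => Set.rangeSplitting a ⟨x, mem_range x⟩
  have a_idx : ∀ x, a (idx x) = x := fun x => Set.apply_rangeSplitting a _
  let f : S ↪[L] M :=
    { toFun := fun x => b (idx x)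
      inj' := fun x y hxy => Subtype.ext <| by
        rw [← a_idx x, ← a_idx y]; exact (heq _ _).2 hxy
      map_fun' := fun f => isEmptyElim f
      map_rel' := fun r v => by
        change RelMap r (b ∘ idx ∘ v) ↔ RelMap r (fun i => (v i : M))
        simp only [← a_idx]
        exact (hrel r (idx ∘ v)).symm }
  obtain ⟨τ, hτ⟩ := hM S (Substructure.fg_closure (Set.finite_range a)) f
  refine ⟨τ, fun i => ?_⟩
  have hi : a i ∈ S := Substructure.subset_closure ⟨i, rfl⟩
  calc τ (a i) = f ⟨a i, hi⟩ := by rw [hτ]; rfl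
    _ = b i := (heq _ _).1 (a_idx ⟨a i, hi⟩)

end FirstOrder.Language

namespace Ivanov

section Good

def LRel.HoldsOnP : ∀ {n : ℕ}, LRel n → Prop
  | _, .P => True
  | _, _ => False

variable {ar : ℕ → ℕ} {s : Set ℕ} {M : Type u} [(LFull ar s).Structure M]

@[simp]
theorem isP_coe {S : (LFull ar s).Substructure M} (x : S) : isP ar s (x : M) ↔ isP ar s x :=
  Iff.of_eq (congrArg _ (FinVec.map_eq Subtype.val ![x]))

theorem IsGood.relMap_inl_iff (good : IsGood ar s M) {n : ℕ} (lr : LRel n) {w : Fin n → M}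
    (hw : ∀ i, isP ar s (w i)) :
    RelMap (L := LFull ar s) (Sum.inl lr) w ↔ lr.HoldsOnP := by
  have notQ : ∀ i, ¬isQ ar s (w i) := fun i hQ => good.not_both _ ⟨hw i, hQ⟩
  rw [← FinVec.etaExpand_eq w]
  cases lr with
  | P => exact iff_of_true (hw 0) trivial
  | Q => exact iff_of_false (notQ 0) id
  | lam => exact iff_of_false (fun h => notQ 0 (good.lam_q _ h)) id
  | rho => exact iff_of_false (fun h => notQ 0 (good.rho_q _ h)) id
  | H => exact iff_of_false (fun h => notQ 0 (good.h_q _ _ h).1) id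
  | S => exact iff_of_false (fun h => notQ 1 (good.s_pq _ _ _ _ h).2.1) id

theorem relMap_inl_iff_of_forall_fg_isGood
    (hgood : ∀ S : (LFull ar s).Substructure M, S.FG → IsGood ar s S)
    {n : ℕ} (lr : LRel n) {w : Fin n → M} (hw : ∀ i, isP ar s (w i)) :
    RelMap (L := LFull ar s) (Sum.inl lr) w ↔ lr.HoldsOnP := by
  let S := Substructure.closure (LFull ar s) (Set.range w)
  let w' : Fin n → S := fun i => ⟨w i, Substructure.subset_closure ⟨i, rfl⟩⟩
  exact (S.subtype.map_rel _ w').trans <|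
    (hgood S (Substructure.fg_closure (Set.finite_range w))).relMap_inl_iff lr
      fun i => (isP_coe _).1 (hw i)

theorem exists_equiv_apply_eq_of_realize_iff
    (hgood : ∀ S : (LFull ar s).Substructure M, S.FG → IsGood ar s S)
    (hM : (LFull ar s).IsUltrahomogeneous M) {k : ℕ} {a b : Fin k → Ppart ar s M}
    (h : ∀ φ : (L0r ar s).Formula (Fin k), φ.Realize a ↔ φ.Realize b) :
    ∃ τ : M ≃[LFull ar s] M, ∀ i, τ (a i) = b i := by
  refine hM.exists_equiv_apply_eq (fun i j => ?_) fun r t => ?_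
  · simpa only [Subtype.ext_iff] using eq_iff_eq_of_realize_iff h i j
  · cases r with
    | inl lr =>
      exact (relMap_inl_iff_of_forall_fg_isGood hgood lr fun i => (a (t i)).2).trans
        (relMap_inl_iff_of_forall_fg_isGood hgood lr fun i => (b (t i)).2).symm
    | inr r => exact relMap_comp_iff_of_realize_iff h r t

end Good

theorem statement_7_general
    (ar : ℕ → ℕ)
    (M₀ : Type u) [(L0r ar Set.univ).Structure M₀]
    (U : Type u) [(LFull ar Set.univ).Structure U]
    (hUhom : (LFull ar Set.univ).IsUltrahomogeneous U)
    (hUage : (LFull ar Set.univ).age U = Kclass ar Set.univ M₀) :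
    (∀ (k : ℕ) (a b : Fin k → Ppart ar Set.univ U),
      (∀ φ : (L0r ar Set.univ).Formula (Fin k), φ.Realize a ↔ φ.Realize b) →
      ∃ τ : U ≃[LFull ar Set.univ] U, ∀ i, τ (a i : U) = ((b i : U))) ∧
    (∀ (σ : Ppart ar Set.univ U ≃[L0r ar Set.univ] Ppart ar Set.univ U)
      (k : ℕ) (a : Fin k → Ppart ar Set.univ U),
      ∃ τ : U ≃[LFull ar Set.univ] U, ∀ i, τ (a i : U) = ((σ (a i) : U))) := by
  have hgood : ∀ S : (LFull ar Set.univ).Substructure U, S.FG → IsGood ar Set.univ S :=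
    fun S hS => (hUage ▸ age.fg_substructure hS : Bundled.mk S ∈ Kclass ar Set.univ M₀).2.1
  have homogeneous := fun k (a b : Fin k → Ppart ar Set.univ U) =>
    exists_equiv_apply_eq_of_realize_iff hgood hUhom (a := a) (b := b)
  exact ⟨homogeneous, fun σ k a =>
    homogeneous k a (σ ∘ a) fun φ => (StrongHomClass.realize_formula σ φ).symm⟩

/-- If two finite tuples from `P(U)` realize the same complete
`L₀`-type in the induced `L₀`-structure on `P(U)`, then some automorphism of `U`
maps one to the other; consequently the image of the restriction homomorphism
`Aut(U) → Aut(P(U))` is dense. -/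
theorem statement_7
    (ar : ℕ → ℕ)
    (har_le : ∀ n : ℕ, 0 < n → ar n ≤ n)
    (har_mono : ∀ m n : ℕ, 0 < m → m ≤ n → ar m ≤ ar n)
    (M₀ : Type u) [(L0r ar Set.univ).Structure M₀] [Countable M₀] [Infinite M₀]
    (hcat : Cardinal.Categorical (ℵ₀ : Cardinal.{u}) ((L0r ar Set.univ).completeTheory M₀))
    (hqe : ∀ (k : ℕ) (φ : (L0r ar Set.univ).Formula (Fin k)),
      ∃ ψ : (L0r ar Set.univ).Formula (Fin k), ψ.IsQF ∧
        ∀ a : Fin k → M₀, φ.Realize a ↔ ψ.Realize a)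
    (hcomplete : ∀ (n : ℕ) (h1 : 0 < n) (a b : Fin (ar n) → M₀),
      RelMap (R ar Set.univ n h1 (Set.mem_univ n)) a →
        RelMap (R ar Set.univ n h1 (Set.mem_univ n)) b →
        ∀ φ : (L0r ar Set.univ).Formula (Fin (ar n)), φ.Realize a ↔ φ.Realize b)
    (U : Type u) [(LFull ar Set.univ).Structure U] [Countable U] [Infinite U]
    (hUhom : (LFull ar Set.univ).IsUltrahomogeneous U)
    (hUage : (LFull ar Set.univ).age U = Kclass ar Set.univ M₀) :
    (∀ (k : ℕ) (a b : Fin k → Ppart ar Set.univ U),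
      (∀ φ : (L0r ar Set.univ).Formula (Fin k), φ.Realize a ↔ φ.Realize b) →
      ∃ τ : U ≃[LFull ar Set.univ] U, ∀ i, τ (a i : U) = ((b i : U))) ∧
    (∀ (σ : Ppart ar Set.univ U ≃[L0r ar Set.univ] Ppart ar Set.univ U)
      (k : ℕ) (a : Fin k → Ppart ar Set.univ U),
      ∃ τ : U ≃[LFull ar Set.univ] U, ∀ i, τ (a i : U) = ((σ (a i) : U))) :=
  statement_7_general ar M₀ U hUhom hUage

end Ivanov
end

section
/- The L₀-structure induced on P(U) = {x ∈ U : U ⊨ P(x)} is isomorphic to M₀; moreover, identifying the two, M₀ is a dense relativised reduct of U: for every automorphism σ of M₀ and every finite tuple ā of elements of P(U) there exists an automorphism τ of U with τ(a) = σ(a) for every coordinate a of ā. -/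
universe u

open FirstOrder FirstOrder.Language FirstOrder.Language.Structure CategoryTheory

namespace Ivanov

/-- The index set `{n : 1 ≤ n ≤ N}` of a finite sublanguage `L_i`. -/
def setLe (N : ℕ) : Set ℕ := {n | n ≤ N}

/-- The inclusion of sublanguages of `L₀`. -/
def L0incl (ar : ℕ → ℕ) {s t : Set ℕ} (h : s ⊆ t) : L0r ar s →ᴸ L0r ar t where
  onFunction := fun {_} f => f
  onRelation := fun {_} r => ⟨r.1, r.2.1, h r.2.2.1, r.2.2.2⟩

/-- The inclusion `L ∪ L_i → L ∪ L_j` of sublanguages of `L ∪ L₀`. -/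
def LFullincl (ar : ℕ → ℕ) {s t : Set ℕ} (h : s ⊆ t) : LFull ar s →ᴸ LFull ar t :=
  (LHom.id L).sumMap (L0incl ar h)

/-- The `L_i`-reduct structure on `M₀` (`L_i` given by the cutoff `N`). -/
def M0redStr (ar : ℕ → ℕ) (N : ℕ) (M₀ : Type u) [(L0r ar Set.univ).Structure M₀] :
    (L0r ar (setLe N)).Structure M₀ :=
  (L0incl ar (Set.subset_univ _)).reduct M₀

/-- The class `K_i` of finite `(L ∪ L_i)`-structures (`L_i` given by the cutoff `N`). -/
def Ksub (ar : ℕ → ℕ) (N : ℕ) (M₀ : Type u) [(L0r ar Set.univ).Structure M₀] :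
    Set (Bundled.{u} (LFull ar (setLe N)).Structure) :=
  letI := M0redStr ar N M₀
  Kclass ar (setLe N) M₀

section Aux

open Substructure

variable (ar : ℕ → ℕ)

lemma comp_vec1 {α β : Type*} (f : α → β) (x : α) : f ∘ ![x] = ![f x] := by
  funext i; fin_cases i <;> rfl

lemma comp_vec2 {α β : Type*} (f : α → β) (x y : α) : f ∘ ![x, y] = ![f x, f y] := by
  funext i; fin_cases i <;> rfl

lemma eq_vec1 {α : Type*} (v : Fin 1 → α) : v = ![v 0] := by
  funext i; fin_cases i <;> rfl

lemma eq_vec2 {α : Type*} (v : Fin 2 → α) : v = ![v 0, v 1] := by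
  funext i; fin_cases i <;> rfl

lemma eq_vec4 {α : Type*} (v : Fin 4 → α) : v = ![v 0, v 1, v 2, v 3] := by
  funext i; fin_cases i <;> rfl

variable {U : Type u} [(LFull ar Set.univ).Structure U]
variable {M₀ : Type u} [(L0r ar Set.univ).Structure M₀]

lemma good_finset (hUage : (LFull ar Set.univ).age U = Kclass ar Set.univ M₀)
    (k : ℕ) (t : Fin k → U) :
    ∃ (D : Bundled.{u} (LFull ar Set.univ).Structure) (_ : D ∈ Kclass ar Set.univ M₀)
      (e : D ↪[LFull ar Set.univ] U) (u : Fin k → D), ∀ i, e (u i) = t i := by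
  let S := closure (LFull ar Set.univ) (Set.range t)
  have hfg : S.FG := fg_closure (Set.finite_range t)
  refine ⟨⟨S, inferInstance⟩, ?_, S.subtype,
    fun i => ⟨t i, subset_closure (Set.mem_range_self i)⟩, fun i => rfl⟩
  rw [← hUage]
  exact ⟨(fg_iff_structure_fg S).1 hfg, ⟨S.subtype⟩⟩

lemma U_not_Q (hUage : (LFull ar Set.univ).age U = Kclass ar Set.univ M₀)
    {x : U} (hx : isP ar Set.univ x) : ¬ isQ ar Set.univ x := by
  obtain ⟨D, hD, e, u, hu⟩ := good_finset ar hUage 1 ![x]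
  have h0 : e (u 0) = x := hu 0
  have hP := e.map_rel (Sum.inl LRel.P) ![u 0]
  have hQ := e.map_rel (Sum.inl LRel.Q) ![u 0]
  rw [comp_vec1, h0] at hP hQ
  intro hq
  exact hD.2.1.not_both (u 0) ⟨hP.mp hx, hQ.mp hq⟩

lemma U_not_lam (hUage : (LFull ar Set.univ).age U = Kclass ar Set.univ M₀)
    {x : U} (hx : isP ar Set.univ x) : ¬ isLam ar Set.univ x := by
  obtain ⟨D, hD, e, u, hu⟩ := good_finset ar hUage 1 ![x]
  have h0 : e (u 0) = x := hu 0
  have hP := e.map_rel (Sum.inl LRel.P) ![u 0]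
  have hL := e.map_rel (Sum.inl LRel.lam) ![u 0]
  rw [comp_vec1, h0] at hP hL
  intro hl
  exact hD.2.1.not_both (u 0) ⟨hP.mp hx, hD.2.1.lam_q _ (hL.mp hl)⟩

lemma U_not_rho (hUage : (LFull ar Set.univ).age U = Kclass ar Set.univ M₀)
    {x : U} (hx : isP ar Set.univ x) : ¬ isRho ar Set.univ x := by
  obtain ⟨D, hD, e, u, hu⟩ := good_finset ar hUage 1 ![x]
  have h0 : e (u 0) = x := hu 0
  have hP := e.map_rel (Sum.inl LRel.P) ![u 0]
  have hR := e.map_rel (Sum.inl LRel.rho) ![u 0]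
  rw [comp_vec1, h0] at hP hR
  intro hl
  exact hD.2.1.not_both (u 0) ⟨hP.mp hx, hD.2.1.rho_q _ (hR.mp hl)⟩

lemma U_not_H (hUage : (LFull ar Set.univ).age U = Kclass ar Set.univ M₀)
    {x : U} (hx : isP ar Set.univ x) (y : U) : ¬ isH ar Set.univ x y := by
  obtain ⟨D, hD, e, u, hu⟩ := good_finset ar hUage 2 ![x, y]
  have h0 : e (u 0) = x := hu 0
  have hP := e.map_rel (Sum.inl LRel.P) ![u 0]
  rw [comp_vec1, h0] at hP
  have hH := e.map_rel (Sum.inl LRel.H) ![u 0, u 1]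
  rw [comp_vec2, h0, hu 1] at hH
  intro hh
  exact hD.2.1.not_both (u 0) ⟨hP.mp hx, (hD.2.1.h_q _ _ (hH.mp hh)).1⟩

lemma U_not_S (hUage : (LFull ar Set.univ).age U = Kclass ar Set.univ M₀)
    {y : U} (hy : isP ar Set.univ y) (x z w : U) : ¬ isS ar Set.univ x y z w := by
  obtain ⟨D, hD, e, u, hu⟩ := good_finset ar hUage 4 ![x, y, z, w]
  have h1 : e (u 1) = y := hu 1
  have hP := e.map_rel (Sum.inl LRel.P) ![u 1]
  rw [comp_vec1, h1] at hP
  have hS := e.map_rel (Sum.inl LRel.S) ![u 0, u 1, u 2, u 3]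
  have hc : e ∘ ![u 0, u 1, u 2, u 3] = ![x, y, z, w] := by
    funext i; fin_cases i <;> simp [hu 0, hu 1, hu 2, hu 3]
  rw [hc] at hS
  intro hs
  exact hD.2.1.not_both (u 1) ⟨hP.mp hy, (hD.2.1.s_pq _ _ _ _ (hS.mp hs)).2.1⟩

lemma lift_lemma
    (hUhom : (LFull ar Set.univ).IsUltrahomogeneous U)
    (hUage : (LFull ar Set.univ).age U = Kclass ar Set.univ M₀)
    (k : ℕ) (a b : Fin k → Ppart ar Set.univ U)
    (hinj : ∀ i j, a i = a j ↔ b i = b j)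
    (hrel : ∀ (m : ℕ) (r : (L0r ar Set.univ).Relations m) (ι : Fin m → Fin k),
      RelMap (M := Ppart ar Set.univ U) r (fun j => a (ι j)) ↔
        RelMap (M := Ppart ar Set.univ U) r (fun j => b (ι j))) :
    ∃ τ : U ≃[LFull ar Set.univ] U, ∀ i, τ (a i : U) = (b i : U) := by
  classical
  let s : Set U := Set.range (fun i => (a i : U))
  let S := closure (LFull ar Set.univ) s
  have hfg : S.FG := fg_closure (Set.finite_range _)
  have hmemS : ∀ x : S, ∃ i, (a i : U) = (x : U) := by
    intro x
    have h2 : (x : U) ∈ closure (LFull ar Set.univ) s := x.2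
    rwa [mem_closure_iff_of_isRelational] at h2
  choose idx hidx using hmemS
  let f : S ↪[LFull ar Set.univ] U :=
    { toFun := fun x => (b (idx x) : U)
      map_fun' := fun {n} F _ => isEmptyElim F
      inj' := by
        intro x y hxy
        have h1 : b (idx x) = b (idx y) := Subtype.ext hxy
        have h2 : a (idx x) = a (idx y) := (hinj _ _).2 h1
        have h3 : (x : U) = (y : U) := by
          rw [← hidx x, ← hidx y, h2]
        exact Subtype.ext h3
      map_rel' := by
        intro n r v
        show RelMap r (fun i => (b (idx (v i)) : U)) ↔ RelMap r (fun i => ((v i : U)))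
        have ha : (fun i => ((v i : U))) = fun i => (a (idx (v i)) : U) :=
          funext fun i => (hidx (v i)).symm
        rw [ha]
        cases r with
        | inr r' => exact (hrel n r' (fun i => idx (v i))).symm
        | inl l =>
          cases l with
          | P =>
            refine iff_of_true ?_ ?_
            · rw [eq_vec1 (fun i => (b (idx (v i)) : U))]
              exact (b (idx (v 0))).2
            · rw [eq_vec1 (fun i => (a (idx (v i)) : U))]
              exact (a (idx (v 0))).2
          | Q =>
            refine iff_of_false ?_ ?_
            · rw [eq_vec1 (fun i => (b (idx (v i)) : U))]
              exact U_not_Q ar hUage (b (idx (v 0))).2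
            · rw [eq_vec1 (fun i => (a (idx (v i)) : U))]
              exact U_not_Q ar hUage (a (idx (v 0))).2
          | lam =>
            refine iff_of_false ?_ ?_
            · rw [eq_vec1 (fun i => (b (idx (v i)) : U))]
              exact U_not_lam ar hUage (b (idx (v 0))).2
            · rw [eq_vec1 (fun i => (a (idx (v i)) : U))]
              exact U_not_lam ar hUage (a (idx (v 0))).2
          | rho =>
            refine iff_of_false ?_ ?_
            · rw [eq_vec1 (fun i => (b (idx (v i)) : U))]
              exact U_not_rho ar hUage (b (idx (v 0))).2
            · rw [eq_vec1 (fun i => (a (idx (v i)) : U))]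
              exact U_not_rho ar hUage (a (idx (v 0))).2
          | H =>
            refine iff_of_false ?_ ?_
            · rw [eq_vec2 (fun i => (b (idx (v i)) : U))]
              exact U_not_H ar hUage (b (idx (v 0))).2 _
            · rw [eq_vec2 (fun i => (a (idx (v i)) : U))]
              exact U_not_H ar hUage (a (idx (v 0))).2 _
          | S =>
            refine iff_of_false ?_ ?_
            · rw [eq_vec4 (fun i => (b (idx (v i)) : U))]
              exact U_not_S ar hUage (b (idx (v 1))).2 _ _ _
            · rw [eq_vec4 (fun i => (a (idx (v i)) : U))]
              exact U_not_S ar hUage (a (idx (v 1))).2 _ _ _ }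
  obtain ⟨τ, hτ⟩ := hUhom S hfg f
  refine ⟨τ, fun i => ?_⟩
  have hmem : (a i : U) ∈ S := subset_closure ⟨i, rfl⟩
  have h1 : f ⟨(a i : U), hmem⟩ = τ (a i : U) :=
    (DFunLike.congr_fun hτ ⟨(a i : U), hmem⟩)
  have h2 : a (idx ⟨(a i : U), hmem⟩) = a i := Subtype.ext (hidx _)
  have h3 : b (idx ⟨(a i : U), hmem⟩) = b i := (hinj _ _).1 h2
  rw [← h1]
  show (b (idx ⟨(a i : U), hmem⟩) : U) = (b i : U)
  rw [h3]

lemma uhomP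
    (hUhom : (LFull ar Set.univ).IsUltrahomogeneous U)
    (hUage : (LFull ar Set.univ).age U = Kclass ar Set.univ M₀) :
    (L0r ar Set.univ).IsUltrahomogeneous (Ppart ar Set.univ U) := by
  intro S hfg f
  have hfin : Finite S := hfg.finite
  obtain ⟨k, ⟨eqv⟩⟩ := Finite.exists_equiv_fin S
  let A : Fin k → Ppart ar Set.univ U := fun i => (eqv.symm i : Ppart ar Set.univ U)
  let B : Fin k → Ppart ar Set.univ U := fun i => f (eqv.symm i)
  have hinj : ∀ i j, A i = A j ↔ B i = B j := by
    intro i j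
    constructor
    · intro h
      exact congrArg (fun z => f z) (Subtype.coe_injective h)
    · intro h
      exact congrArg Subtype.val (f.injective h)
  have hrel : ∀ (m : ℕ) (r : (L0r ar Set.univ).Relations m) (ι : Fin m → Fin k),
      RelMap (M := Ppart ar Set.univ U) r (fun j => A (ι j)) ↔
        RelMap (M := Ppart ar Set.univ U) r (fun j => B (ι j)) := by
    intro m r ι
    exact (f.map_rel r (fun j => eqv.symm (ι j))).symm
  obtain ⟨τ, hτ⟩ := lift_lemma ar hUhom hUage k A B hinj hrel
  have hPmap : ∀ x : U, isP ar Set.univ x ↔ isP ar Set.univ (τ x) := by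
    intro x
    have h := τ.map_rel (Sum.inl LRel.P) ![x]
    rw [comp_vec1] at h
    exact h.symm
  refine ⟨{ toEquiv := Equiv.subtypeEquiv τ.toEquiv (fun x => hPmap x)
            map_fun' := fun {n} F => isEmptyElim F
            map_rel' := fun {n} r v => τ.map_rel (Sum.inr r) (fun i => ((v i : U))) }, ?_⟩
  ext x
  obtain ⟨i, hi⟩ : ∃ i, eqv.symm i = x := ⟨eqv x, eqv.symm_apply_apply x⟩
  subst hi
  exact (hτ i).symm

/-- Extension of an `L₀`-structure to an `(L ∪ L₀)`-structure where `P` holds everywhere and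
the other `L`-relations never hold. -/
def liftStr (s : Set ℕ) (α : Type u) [(L0r ar s).Structure α] : (LFull ar s).Structure α where
  funMap := fun {_} F _ => isEmptyElim F
  RelMap := fun {n} r v =>
    match r with
    | Sum.inl LRel.P => True
    | Sum.inl LRel.Q => False
    | Sum.inl LRel.lam => False
    | Sum.inl LRel.rho => False
    | Sum.inl LRel.H => False
    | Sum.inl LRel.S => False
    | Sum.inr r' => RelMap r' v

lemma ageP (hUage : (LFull ar Set.univ).age U = Kclass ar Set.univ M₀) :
    (L0r ar Set.univ).age (Ppart ar Set.univ U) = (L0r ar Set.univ).age M₀ := by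
  ext A
  constructor
  · rintro ⟨hfgA, ⟨g⟩⟩
    refine ⟨hfgA, ?_⟩
    have hfin : Finite A := hfgA.finite
    obtain ⟨k, ⟨eqv⟩⟩ := Finite.exists_equiv_fin A
    obtain ⟨D, hD, e, u, hu⟩ := good_finset ar hUage k
      (fun i => ((g (eqv.symm i) : Ppart ar Set.univ U) : U))
    obtain ⟨h⟩ := hD.2.2.1
    have hPu : ∀ i, isP ar Set.univ (u i) := by
      intro i
      have h1 := e.map_rel (Sum.inl LRel.P) ![u i]
      rw [comp_vec1, hu i] at h1
      exact h1.mp (g (eqv.symm i)).2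
    refine ⟨{ toFun := fun x => h ⟨u (eqv x), hPu _⟩
              map_fun' := fun {n} F _ => isEmptyElim F
              inj' := ?_
              map_rel' := ?_ }⟩
    · intro x y hxy
      have h1 : u (eqv x) = u (eqv y) := congrArg Subtype.val (h.injective hxy)
      have h3 : e (u (eqv x)) = e (u (eqv y)) := congrArg e h1
      rw [hu, hu] at h3
      have h4 : g x = g y := by
        apply Subtype.ext
        simpa using h3
      have := g.injective h4
      exact this
    · intro n r v
      have h1 := h.map_rel r (fun i => (⟨u (eqv (v i)), hPu _⟩ : Ppart ar Set.univ D))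
      have h2 := e.map_rel (Sum.inr r) (fun i => u (eqv (v i)))
      have h3 := g.map_rel r v
      have h4 : (fun i => e (u (eqv (v i)))) =
          fun i => ((g (v i) : Ppart ar Set.univ U) : U) := by
        funext i
        rw [hu]
        simp
      rw [show (e ∘ fun i => u (eqv (v i))) = fun i => e (u (eqv (v i))) from rfl, h4] at h2
      exact h1.trans (h2.symm.trans h3)
  · rintro ⟨hfgA, ⟨eA⟩⟩
    refine ⟨hfgA, ?_⟩
    have hfin : Finite A := hfgA.finite
    letI DStr : (LFull ar Set.univ).Structure A := liftStr ar Set.univ A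
    have hDK : (⟨A, DStr⟩ : Bundled.{u} (LFull ar Set.univ).Structure) ∈
        Kclass ar Set.univ M₀ := by
      refine ⟨hfin, ?_, ?_, ?_⟩
      · exact
          { part := fun x => Or.inl True.intro
            not_both := fun x hx => hx.2
            lam_q := fun x hx => (hx : False).elim
            rho_q := fun x hx => (hx : False).elim
            h_q := fun x y hx => (hx : False).elim
            r_p := fun k r t _ i => True.intro
            s_pq := fun x y z w hx => (hx : False).elim }
      · exact ⟨{ toFun := fun x => eA x.1
                 map_fun' := fun {n} F _ => isEmptyElim F
                 inj' := fun x y hxy => Subtype.ext (eA.injective hxy)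
                 map_rel' := fun {n} r v => eA.map_rel r (fun i => (v i : A)) }⟩
      · intro n h1 h2 aa c hp
        exact ((hp.cQ ⟨0, h1⟩) : False).elim
    have hDage : (⟨A, DStr⟩ : Bundled.{u} (LFull ar Set.univ).Structure) ∈
        (LFull ar Set.univ).age U := by rw [hUage]; exact hDK
    obtain ⟨j⟩ := hDage.2
    have hPj : ∀ x : A, isP ar Set.univ (j x) := by
      intro x
      have h1 := j.map_rel (Sum.inl LRel.P) ![x]
      rw [comp_vec1] at h1
      exact h1.mpr True.intro
    exact ⟨{ toFun := fun x => ⟨j x, hPj x⟩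
             map_fun' := fun {n} F _ => isEmptyElim F
             inj' := fun x y hxy => j.injective (congrArg Subtype.val hxy)
             map_rel' := fun {n} r v => j.map_rel (Sum.inr r) v }⟩

end Aux

/-- The `L₀`-structure induced on the `P`-part of the generic structure
`U` is isomorphic to `M₀`; moreover `M₀` is a dense relativised reduct of `U`: every
automorphism of the `P`-part agrees on any prescribed finite tuple with the restriction of
an automorphism of `U`. -/
theorem statement_10
    (ar : ℕ → ℕ)
    (har_le : ∀ n : ℕ, 0 < n → ar n ≤ n)
    (har_mono : ∀ m n : ℕ, 0 < m → m ≤ n → ar m ≤ ar n)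
    (li : ℕ → ℕ) (hli_pos : ∀ i, 0 < li i) (hli_mono : StrictMono li)
    (hli_cof : ∀ n : ℕ, ∃ i, n ≤ li i)
    (hli_arity : ∀ i : ℕ, ar (li i) < ar (li (i + 1)))
    (M₀ : Type u) [(L0r ar Set.univ).Structure M₀] [Countable M₀] [Infinite M₀]
    (hqe : ∀ (i k : ℕ) (φ : (L0r ar (setLe (li i))).Formula (Fin k)),
      ∃ ψ : (L0r ar (setLe (li i))).Formula (Fin k), ψ.IsQF ∧
        ∀ a : Fin k → M₀,
          Formula.Realize (L := L0r ar Set.univ)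
              ((L0incl ar (Set.subset_univ _)).onFormula φ) a ↔
            Formula.Realize (L := L0r ar Set.univ)
              ((L0incl ar (Set.subset_univ _)).onFormula ψ) a)
    (hM0hom : (L0r ar Set.univ).IsUltrahomogeneous M₀)
    (hM0jep : JointEmbedding ((L0r ar Set.univ).age M₀))
    (hM0ap : Amalgamation ((L0r ar Set.univ).age M₀))
    (U : Type u) [(LFull ar Set.univ).Structure U] [Countable U]
    (hUhom : (LFull ar Set.univ).IsUltrahomogeneous U)
    (hUage : (LFull ar Set.univ).age U = Kclass ar Set.univ M₀) :
    Nonempty (Ppart ar Set.univ U ≃[L0r ar Set.univ] M₀) ∧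
    (∀ (σ : Ppart ar Set.univ U ≃[L0r ar Set.univ] Ppart ar Set.univ U)
      (k : ℕ) (a : Fin k → Ppart ar Set.univ U),
      ∃ τ : U ≃[LFull ar Set.univ] U, ∀ i, τ (a i : U) = ((σ (a i) : U))) := by
  have uh := uhomP ar hUhom hUage
  have hage := ageP ar hUage
  have lim1 : IsFraisseLimit ((L0r ar Set.univ).age M₀) (Ppart ar Set.univ U) := ⟨uh, hage⟩
  have lim2 : IsFraisseLimit ((L0r ar Set.univ).age M₀) M₀ := ⟨hM0hom, rfl⟩
  refine ⟨lim1.nonempty_equiv lim2, ?_⟩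
  intro σ k a
  exact lift_lemma ar hUhom hUage k a (fun i => σ (a i))
    (fun i j => ⟨fun h => congrArg σ h, fun h => σ.injective h⟩)
    (fun m r ι => (σ.map_rel r (fun j => a (ι j))).symm)


end Ivanov
end

section
/- Let i < j and let m be the largest arity occurring in L_i. Then the classes K_i and K_j consist of the same structures among those whose Q-part has at most m elements: the (L ∪ L_i)-reduct of every member of K_j whose Q-part has size at most m belongs to K_i, and conversely every member of K_i whose Q-part has size at most m admits an expansion to an (L ∪ L_j)-structure belonging to K_j. -/
universe u

open FirstOrder FirstOrder.Language FirstOrder.Language.Structure CategoryTheory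

namespace Ivanov

section AuxProof

lemma str_ext {L' : Language} [∀ n, IsEmpty (L'.Functions n)] {M : Type u}
    (S1 S2 : L'.Structure M)
    (h : ∀ (k : ℕ) (r : L'.Relations k) (t : Fin k → M),
      (@RelMap L' M S1 k r t ↔ @RelMap L' M S2 k r t)) : S1 = S2 := by
  rcases S1 with ⟨f1, r1⟩
  rcases S2 with ⟨f2, r2⟩
  congr 1
  · funext n g v
    exact isEmptyElim g
  · funext k r t
    exact propext (h k r t)

variable (ar : ℕ → ℕ) (Ni Nj : ℕ) {M₀ : Type u} [(L0r ar Set.univ).Structure M₀]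
  {D : Type u} [(LFull ar (setLe Ni)).Structure D]
  (f : Ppart ar (setLe Ni) D → M₀)

/-- The relations of the expansion of an `(L ∪ L_i)`-structure to `L ∪ L_j`. -/
def expandRel (k : ℕ) (r : (LFull ar (setLe Nj)).Relations k) (t : Fin k → D) : Prop :=
  match r with
  | Sum.inl r0 => RelMap (L := LFull ar (setLe Ni)) (n := k) (Sum.inl r0) t
  | Sum.inr r0 =>
    if h : r0.1 ≤ Ni then
      RelMap (L := LFull ar (setLe Ni)) (n := k) (Sum.inr ⟨r0.1, r0.2.1, h, r0.2.2.2⟩) t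
    else
      ∃ hp : ∀ v, isP ar (setLe Ni) (t v),
        RelMap (L := L0r ar Set.univ) (M := M₀)
          (⟨r0.1, r0.2.1, Set.mem_univ _, r0.2.2.2⟩ : (L0r ar Set.univ).Relations k)
          (fun v => f ⟨t v, hp v⟩)

/-- The expansion of an `(L ∪ L_i)`-structure to `L ∪ L_j`, with the new relations pulled
back from `M₀` along an embedding of the `P`-part. -/
def expandStr : (LFull ar (setLe Nj)).Structure D where
  funMap := fun {_} g _ => isEmptyElim g
  RelMap := fun {k} r t => expandRel ar Ni Nj f k r t

lemma expandRel_inr_pos {k : ℕ} (r0 : (L0r ar (setLe Nj)).Relations k)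
    (h : r0.1 ≤ Ni) (t : Fin k → D) :
    expandRel ar Ni Nj f k (Sum.inr r0) t ↔
      RelMap (L := LFull ar (setLe Ni)) (n := k) (Sum.inr ⟨r0.1, r0.2.1, h, r0.2.2.2⟩) t := by
  simp only [expandRel]
  rw [dif_pos h]

lemma expandRel_inr_neg {k : ℕ} (r0 : (L0r ar (setLe Nj)).Relations k)
    (h : ¬ r0.1 ≤ Ni) (t : Fin k → D) :
    expandRel ar Ni Nj f k (Sum.inr r0) t ↔
      ∃ hp : ∀ v, isP ar (setLe Ni) (t v),
        RelMap (L := L0r ar Set.univ) (M := M₀)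
          (⟨r0.1, r0.2.1, Set.mem_univ _, r0.2.2.2⟩ : (L0r ar Set.univ).Relations k)
          (fun v => f ⟨t v, hp v⟩) := by
  simp only [expandRel]
  rw [dif_neg h]

end AuxProof

/-- For `i < j`, with `m` the largest arity occurring in `L_i`, the
classes `K_i` and `K_j` consist of the same structures among those whose `Q`-part has at
most `m` elements: the `(L ∪ L_i)`-reduct of any member of `K_j` with `Q`-part of size at
most `m` lies in `K_i`, and every member of `K_i` with `Q`-part of size at most `m`
expands to a member of `K_j`. -/
theorem statement_11
    (ar : ℕ → ℕ)
    (har_le : ∀ n : ℕ, 0 < n → ar n ≤ n)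
    (har_mono : ∀ m n : ℕ, 0 < m → m ≤ n → ar m ≤ ar n)
    (li : ℕ → ℕ) (hli_pos : ∀ i, 0 < li i) (hli_mono : StrictMono li)
    (hli_cof : ∀ n : ℕ, ∃ i, n ≤ li i)
    (hli_arity : ∀ i : ℕ, ar (li i) < ar (li (i + 1)))
    (M₀ : Type u) [(L0r ar Set.univ).Structure M₀] [Countable M₀] [Infinite M₀]
    (hqe : ∀ (i k : ℕ) (φ : (L0r ar (setLe (li i))).Formula (Fin k)),
      ∃ ψ : (L0r ar (setLe (li i))).Formula (Fin k), ψ.IsQF ∧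
        ∀ a : Fin k → M₀,
          Formula.Realize (L := L0r ar Set.univ)
              ((L0incl ar (Set.subset_univ _)).onFormula φ) a ↔
            Formula.Realize (L := L0r ar Set.univ)
              ((L0incl ar (Set.subset_univ _)).onFormula ψ) a)
    (hM0hom : (L0r ar Set.univ).IsUltrahomogeneous M₀)
    (hM0jep : JointEmbedding ((L0r ar Set.univ).age M₀))
    (hM0ap : Amalgamation ((L0r ar Set.univ).age M₀))
    (i j : ℕ) (hij : i < j)
    (hsub : setLe (li i) ⊆ setLe (li j)) :
    (∀ D ∈ Ksub ar (li j) M₀,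
      Nat.card {x : D // isQ ar (setLe (li j)) x} ≤ ar (li i) →
        (⟨D, (LFullincl ar hsub).reduct D⟩ : Bundled.{u} (LFull ar (setLe (li i))).Structure)
          ∈ Ksub ar (li i) M₀) ∧
    (∀ D ∈ Ksub ar (li i) M₀,
      Nat.card {x : D // isQ ar (setLe (li i)) x} ≤ ar (li i) →
        ∃ inst : (LFull ar (setLe (li j))).Structure D,
          (⟨D, inst⟩ : Bundled.{u} (LFull ar (setLe (li j))).Structure) ∈ Ksub ar (li j) M₀ ∧
          @LHom.reduct _ _ (LFullincl ar hsub) D inst = D.str) := by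
  constructor
  · -- the reduct of a member of K_j lies in K_i
    rintro D ⟨hfin, hgood, ⟨g⟩, hpair⟩ _hcard
    letI : (L0r ar (setLe (li i))).Structure M₀ := M0redStr ar (li i) M₀
    letI : (L0r ar (setLe (li j))).Structure M₀ := M0redStr ar (li j) M₀
    refine ⟨hfin, ?_, ?_, ?_⟩
    · exact ⟨hgood.part, hgood.not_both, hgood.lam_q, hgood.rho_q, hgood.h_q,
        fun k r t h v =>
          hgood.r_p k ⟨r.1, r.2.1, hsub r.2.2.1, r.2.2.2⟩ t h v,
        hgood.s_pq⟩
    · refine ⟨⟨⟨fun x => g ⟨x.1, x.2⟩, ?_⟩, fun {n} fn => isEmptyElim fn, ?_⟩⟩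
      · intro x y hxy
        exact Subtype.ext (congrArg Subtype.val (g.injective hxy))
      · intro k r x
        exact g.map_rel' ⟨r.1, r.2.1, hsub r.2.2.1, r.2.2.2⟩
          (fun v => ⟨(x v).1, (x v).2⟩)
    · intro n h1 h2 a c hp
      exact hpair n h1 (hsub h2) a c
        ⟨hp.le, hp.aP, hp.cQ, hp.inj, hp.hH, hp.hlam, hp.hrho, hp.hS⟩
  · -- a member of K_i with small Q-part expands to a member of K_j
    rintro D ⟨hfin, hgood, ⟨f⟩, hpair⟩ hcard
    letI : (L0r ar (setLe (li i))).Structure M₀ := M0redStr ar (li i) M₀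
    letI : (L0r ar (setLe (li j))).Structure M₀ := M0redStr ar (li j) M₀
    haveI : Finite D := hfin
    refine ⟨expandStr ar (li i) (li j) f, ⟨hfin, ?_, ?_, ?_⟩, ?_⟩
    · -- IsGood
      refine ⟨hgood.part, hgood.not_both, hgood.lam_q, hgood.rho_q, hgood.h_q,
        ?_, hgood.s_pq⟩
      intro k r t h v
      by_cases h' : r.1 ≤ li i
      · exact hgood.r_p k ⟨r.1, r.2.1, h', r.2.2.2⟩ t
          ((expandRel_inr_pos ar (li i) (li j) f r h' t).mp h) v
      · obtain ⟨hp, -⟩ := (expandRel_inr_neg ar (li i) (li j) f r h' t).mp h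
        exact hp v
    · -- the P-part embeds into M₀
      refine ⟨⟨⟨fun x => f ⟨x.1, x.2⟩, ?_⟩, fun {n} fn => isEmptyElim fn, ?_⟩⟩
      · intro x y hxy
        exact Subtype.ext (congrArg Subtype.val (f.injective hxy))
      · intro k r x
        by_cases h' : r.1 ≤ li i
        · exact Iff.trans
            (f.map_rel' ⟨r.1, r.2.1, h', r.2.2.2⟩ (fun v => ⟨(x v).1, (x v).2⟩))
            (expandRel_inr_pos ar (li i) (li j) f r h' (fun v => (x v).1)).symm
        · constructor
          · intro hL
            exact (expandRel_inr_neg ar (li i) (li j) f r h' (fun v => (x v).1)).mpr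
              ⟨fun v => (x v).2, hL⟩
          · intro hR
            obtain ⟨hp, hr⟩ :=
              (expandRel_inr_neg ar (li i) (li j) f r h' (fun v => (x v).1)).mp hR
            exact hr
    · -- the n-pair condition
      intro n h1 h2 a c hp
      have hinj : Function.Injective
          (fun v : Fin n => (⟨c v, hp.cQ v⟩ : {x : D // isQ ar (setLe (li i)) x})) := by
        intro v w hvw
        exact hp.inj (congrArg Subtype.val hvw)
      have hn_card : n ≤ ar (li i) := by
        have := Nat.card_le_card_of_injective _ hinj
        simpa using this.trans hcard
      have h2i : n ∈ setLe (li i) := le_trans hn_card (har_le (li i) (hli_pos i))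
      have hres := hpair n h1 h2i a c
        ⟨hp.le, hp.aP, hp.cQ, hp.inj, hp.hH, hp.hlam, hp.hrho, hp.hS⟩
      exact (expandRel_inr_pos ar (li i) (li j) f (R ar (setLe (li j)) n h1 h2)
        (h2i : n ≤ li i) a).mpr hres
    · -- the reduct of the expansion is the original structure
      apply str_ext
      intro k r t
      cases r with
      | inl r0 => exact Iff.rfl
      | inr r0 =>
        exact expandRel_inr_pos ar (li i) (li j) f
          ⟨r0.1, r0.2.1, hsub r0.2.2.1, r0.2.2.2⟩ r0.2.2.1 t

end Ivanov
end

section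
/- The class C_E is closed under induced substructures and has both the joint embedding property and the amalgamation property. -/
/-!
All defining conditions of `C_E` are universal, so `C_E` is closed under substructures, and joint
embedding is amalgamation over the empty structure. To amalgamate `N` and `P` over `M`, glue `P`
onto `N` along `M` and make injective tuples equivalent exactly when they carry the same label:
tuples inside `N` keep their `N`-class; tuples inside `P` keep their `P`-class, except that a class
containing a tuple from `M` is merged with the `N`-class of that tuple, which is well defined
because both embeddings of `M` preserve and reflect `Eₙ`; every other injective tuple is
equivalent only to its own permutations.
-/

universe u

open FirstOrder FirstOrder.Language FirstOrder.Language.Structure CategoryTheory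

namespace Ivanov

/-- `pp n` is the `(n+1)`-st prime number (`pp 0 = 2 = p₁`, `pp 1 = 3 = p₂`, …). -/
noncomputable def pp (n : ℕ) : ℕ := Nat.nth Nat.Prime n

/-- The language `L_E`, with one relation symbol `Eₙ` of arity `2 ⬝ pₙ` for each `n`. -/
def LE : Language := ⟨fun _ => Empty, fun k => {n : ℕ // 2 * pp n = k}⟩

instance (n : ℕ) : IsEmpty (LE.Functions n) := ⟨fun f => Empty.elim f⟩

/-- `Eₙ`, read as a binary relation between `pₙ`-tuples. -/
def EErel {M : Type u} [LE.Structure M] (n : ℕ) (x y : Fin (pp n) → M) : Prop :=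
  RelMap (L := LE) (n := 2 * pp n) (⟨n, rfl⟩ : LE.Relations (2 * pp n))
    (fun i => Fin.append x y (Fin.cast (two_mul (pp n)) i))

/-- The defining conditions of the class `C_E`, for a single `n` : `Eₙ` is an equivalence
relation on `pₙ`-tuples, invariant under permuting the coordinates of each of the two tuples,
and the `pₙ`-tuples with a repeated coordinate form a single isolated `Eₙ`-class. -/
structure EGood (M : Type u) [LE.Structure M] (n : ℕ) : Prop where
  refl : ∀ x : Fin (pp n) → M, EErel n x x
  symm : ∀ x y : Fin (pp n) → M, EErel n x y → EErel n y x
  trans : ∀ x y z : Fin (pp n) → M, EErel n x y → EErel n y z → EErel n x z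
  perm : ∀ (x y : Fin (pp n) → M) (σ τ : Equiv.Perm (Fin (pp n))),
    EErel n x y → EErel n (x ∘ σ) (y ∘ τ)
  diag : ∀ x y : Fin (pp n) → M, ¬Function.Injective x → ¬Function.Injective y → EErel n x y
  isolated : ∀ x y : Fin (pp n) → M, Function.Injective x → ¬Function.Injective y →
    ¬EErel n x y

/-- The class `C_E` of all finite `L_E`-structures in which each `Eₙ` is a coordinate-wise
symmetric equivalence relation on `pₙ`-tuples whose tuples with repeated coordinates form a
single isolated class. -/
def CEclass : Set (Bundled.{u} LE.Structure) :=
  {M | Finite M ∧ ∀ n : ℕ, EGood M n}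

/-- The induced structure on a subset of an `L_E`-structure. -/
def inducedStrE {M : Type u} [LE.Structure M] (A : Set M) : LE.Structure A where
  funMap := fun {_} f _ => isEmptyElim f
  RelMap := fun {_} r t => RelMap (L := LE) r fun i => (t i : M)

lemma pp_pos (n : ℕ) : 0 < pp n := (Nat.prime_nth_prime n).pos

lemma comp_append {α β : Type*} (f : α → β) {m k : ℕ} (u : Fin m → α) (v : Fin k → α) :
    f ∘ Fin.append u v = Fin.append (f ∘ u) (f ∘ v) := by
  funext i
  induction i using Fin.addCases <;> simp

lemma partialInv_comp_left_comp {α β ι : Type*} {f : α → β} (hf : Function.Injective f)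
    (a : ι → α) : Function.partialInv (fun a : ι → α => f ∘ a) (f ∘ a) = some a :=
  Function.partialInv_left hf.comp_left a

lemma partialInv_comp_left_comp_equiv {α β ι ι' : Type*} {f : α → β}
    (hf : Function.Injective f) (e : ι' ≃ ι) (x : ι → β) :
    Function.partialInv (fun a : ι' → α => f ∘ a) (x ∘ e) =
      (Function.partialInv (fun a : ι → α => f ∘ a) x).map (· ∘ e) := by
  cases h : Function.partialInv (fun a : ι → α => f ∘ a) x with
  | some a =>
    obtain rfl : f ∘ a = x := (hf.comp_left.isPartialInv _ _).1 h
    exact partialInv_comp_left_comp hf (a ∘ e)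
  | none =>
    cases h' : Function.partialInv (fun a : ι' → α => f ∘ a) (x ∘ e) with
    | none => rfl
    | some c =>
      have hc : f ∘ (c ∘ e.symm) = x := by
        rw [← Function.comp_assoc, (hf.comp_left.isPartialInv _ _).1 h', Function.comp_assoc,
          e.self_comp_symm, Function.comp_id]
      rw [← hc, partialInv_comp_left_comp hf] at h
      cases h

section Tuples

variable {A B : Type u}

def structureOfRel (R : ∀ n, (Fin (pp n) → A) → (Fin (pp n) → A) → Prop) :
    LE.Structure A where
  funMap := fun {_} f _ => isEmptyElim f
  RelMap := fun {_} r t => R r.1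
    (fun i => t (Fin.cast r.2 (Fin.cast (two_mul (pp r.1)).symm (Fin.castAdd (pp r.1) i))))
    (fun i => t (Fin.cast r.2 (Fin.cast (two_mul (pp r.1)).symm (Fin.natAdd (pp r.1) i))))

lemma structureOfRel_EErel (R : ∀ n, (Fin (pp n) → A) → (Fin (pp n) → A) → Prop) (n : ℕ)
    (x y : Fin (pp n) → A) : @EErel A (structureOfRel R) n x y ↔ R n x y := by
  show R n _ _ ↔ R n x y
  refine iff_of_eq (congrArg₂ _ (funext fun i => ?_) (funext fun i => ?_))
  exacts [Fin.append_left x y i, Fin.append_right x y i]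

variable [LE.Structure A] [LE.Structure B]

lemma relMap_iff_EErel (n : ℕ) (t : Fin (2 * pp n) → A) :
    RelMap (L := LE) (⟨n, rfl⟩ : LE.Relations (2 * pp n)) t ↔
      EErel n (fun i => t (Fin.cast (two_mul (pp n)).symm (Fin.castAdd (pp n) i)))
        (fun i => t (Fin.cast (two_mul (pp n)).symm (Fin.natAdd (pp n) i))) := by
  unfold EErel
  refine iff_of_eq (congrArg _ ?_).symm
  funext i
  exact congrFun
    (Fin.append_castAdd_natAdd (f := fun j => t (Fin.cast (two_mul (pp n)).symm j))) _

lemma EErel_embedding_comp_iff (g : A ↪[LE] B) {n : ℕ} (x y : Fin (pp n) → A) :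
    EErel n (g ∘ x) (g ∘ y) ↔ EErel n x y := by
  unfold EErel
  refine Iff.trans (iff_of_eq (congrArg _ (funext fun i => ?_))) (g.map_rel _ _)
  exact (congrFun (comp_append g x y) _).symm

def embeddingOfEErel (e : A → B) (he : Function.Injective e)
    (h : ∀ n (x y : Fin (pp n) → A), EErel n (e ∘ x) (e ∘ y) ↔ EErel n x y) : A ↪[LE] B where
  toFun := e
  inj' := he
  map_fun' := fun f => isEmptyElim f
  map_rel' := by
    rintro _ ⟨n, rfl⟩ t
    exact (relMap_iff_EErel n (e ∘ t)).trans ((h n _ _).trans (relMap_iff_EErel n t).symm)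

def embeddingOfIsEmpty [IsEmpty A] : A ↪[LE] B :=
  embeddingOfEErel isEmptyElim (fun a => isEmptyElim a)
    fun n x => isEmptyElim (x ⟨0, pp_pos n⟩)

end Tuples

def eclass {A : Type u} [LE.Structure A] (n : ℕ) (x : Fin (pp n) → A) : Set (Fin (pp n) → A) :=
  {y | EErel n x y}

def labelRel {ι X L : Type*} (lab : (ι → X) → L) (x y : ι → X) : Prop :=
  (¬Function.Injective x ∧ ¬Function.Injective y) ∨
    (Function.Injective x ∧ Function.Injective y ∧ lab x = lab y)

namespace EGood

variable {A B : Type u} [LE.Structure A] [LE.Structure B] {n : ℕ}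

lemma eclass_eq_iff (h : EGood A n) {x y : Fin (pp n) → A} :
    eclass n x = eclass n y ↔ EErel n x y := by
  refine ⟨fun hxy => ?_, fun hxy => Set.ext fun z =>
    ⟨h.trans _ _ _ (h.symm _ _ hxy), h.trans _ _ _ hxy⟩⟩
  have hy : y ∈ eclass n y := h.refl y
  rwa [← hxy] at hy

lemma rel_comp_perm (h : EGood A n) (x : Fin (pp n) → A) (σ : Equiv.Perm (Fin (pp n))) :
    EErel n (x ∘ σ) x := by
  simpa using h.perm x x σ 1 (h.refl x)

lemma rel_congr (h : EGood A n) {x x' y y' : Fin (pp n) → A} (hx : EErel n x x')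
    (hy : EErel n y y') : EErel n x y ↔ EErel n x' y' :=
  ⟨fun hxy => h.trans _ _ _ (h.symm _ _ hx) (h.trans _ _ _ hxy hy),
    fun hxy => h.trans _ _ _ hx (h.trans _ _ _ hxy (h.symm _ _ hy))⟩

lemma injective_iff_of_rel (h : EGood A n) {x y : Fin (pp n) → A} (hxy : EErel n x y) :
    Function.Injective x ↔ Function.Injective y :=
  ⟨fun hx => by_contra fun hy => h.isolated x y hx hy hxy,
    fun hy => by_contra fun hx => h.isolated y x hy hx (h.symm _ _ hxy)⟩

lemma EErel_iff_labelRel (h : EGood A n) (x y : Fin (pp n) → A) :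
    EErel n x y ↔ labelRel (eclass n) x y := by
  by_cases hx : Function.Injective x
  · simp only [labelRel, hx, not_true, false_and, false_or, true_and, h.eclass_eq_iff]
    exact ⟨fun hxy => ⟨(h.injective_iff_of_rel hxy).1 hx, hxy⟩, And.right⟩
  · simp only [labelRel, hx, not_false_eq_true, true_and, false_and, or_false]
    exact ⟨fun hxy hy => hx ((h.injective_iff_of_rel hxy).2 hy), h.diag x y hx⟩

lemma comap (h : EGood B n) (f : A → B) (hf : Function.Injective f)
    (hfE : ∀ x y : Fin (pp n) → A, EErel n (f ∘ x) (f ∘ y) ↔ EErel n x y) : EGood A n where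
  refl x := (hfE x x).1 (h.refl _)
  symm x y hxy := (hfE y x).1 (h.symm _ _ ((hfE x y).2 hxy))
  trans x y z hxy hyz := (hfE x z).1 (h.trans _ _ _ ((hfE x y).2 hxy) ((hfE y z).2 hyz))
  perm x y σ τ hxy := (hfE _ _).1 (h.perm _ _ σ τ ((hfE x y).2 hxy))
  diag x y hx hy := (hfE x y).1 (h.diag _ _ (fun h' => hx h'.of_comp) fun h' => hy h'.of_comp)
  isolated x y hx hy hxy :=
    h.isolated _ _ (hf.comp hx) (fun h' => hy h'.of_comp) ((hfE x y).2 hxy)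

lemma of_labelRel {L : Type*} {lab : (Fin (pp n) → A) → L}
    (hA : ∀ x y, EErel n x y ↔ labelRel lab x y)
    (hlab : ∀ x (σ : Equiv.Perm (Fin (pp n))), lab (x ∘ σ) = lab x) : EGood A n where
  refl x := (hA x x).2 (by by_cases hx : Function.Injective x <;> simp [labelRel, hx])
  symm x y hxy := by
    rcases (hA x y).1 hxy with ⟨hx, hy⟩ | ⟨hx, hy, e⟩
    exacts [(hA y x).2 (.inl ⟨hy, hx⟩), (hA y x).2 (.inr ⟨hy, hx, e.symm⟩)]
  trans x y z hxy hyz := by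
    rcases (hA x y).1 hxy with ⟨hx, hy⟩ | ⟨hx, hy, e⟩ <;>
      rcases (hA y z).1 hyz with ⟨hy', hz⟩ | ⟨hy', hz, e'⟩
    exacts [(hA x z).2 (.inl ⟨hx, hz⟩), absurd hy' hy, absurd hy hy',
      (hA x z).2 (.inr ⟨hx, hz, e.trans e'⟩)]
  perm x y σ τ hxy := by
    refine (hA _ _).2 ?_
    simpa only [labelRel, σ.injective_comp, τ.injective_comp, hlab] using (hA x y).1 hxy
  diag x y hx hy := (hA x y).2 (.inl ⟨hx, hy⟩)
  isolated x y hx hy hxy := by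
    rcases (hA x y).1 hxy with ⟨hx', -⟩ | ⟨-, hy', -⟩
    exacts [hx' hx, hy hy']

end EGood

def embeddingOfLabel {A B : Type u} [LE.Structure A] [LE.Structure B] {L : ℕ → Type*}
    {lab : ∀ n, (Fin (pp n) → B) → L n} (hB : ∀ n x y, EErel n x y ↔ labelRel (lab n) x y)
    (hA : ∀ n, EGood A n) (e : A → B) (he : Function.Injective e)
    (hlab : ∀ n (x y : Fin (pp n) → A), lab n (e ∘ x) = lab n (e ∘ y) ↔ EErel n x y) :
    A ↪[LE] B :=
  embeddingOfEErel e he fun n x y => by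
    rw [hB, (hA n).EErel_iff_labelRel, labelRel, labelRel, hlab, (hA n).eclass_eq_iff,
      he.of_comp_iff, he.of_comp_iff]

lemma inducedStrE_EErel {M : Type u} [LE.Structure M] (A : Set M) {n : ℕ}
    (x y : Fin (pp n) → A) :
    @EErel A (inducedStrE A) n x y ↔ EErel n (Subtype.val ∘ x) (Subtype.val ∘ y) := by
  unfold EErel
  rw [← comp_append]
  rfl

lemma inducedStrE_mem_CEclass {M : Bundled.{u} LE.Structure} (hM : M ∈ CEclass) (A : Set M) :
    (⟨A, inducedStrE A⟩ : Bundled.{u} LE.Structure) ∈ CEclass := by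
  have := hM.1
  exact ⟨inferInstance, fun n => @EGood.comap _ _ (inducedStrE A) _ n (hM.2 n) _
    Subtype.val_injective fun x y => (inducedStrE_EErel A x y).symm⟩

abbrev Amalgam {M P : Type u} [LE.Structure M] [LE.Structure P] (N : Type u)
    (gP : M ↪[LE] P) : Type u :=
  N ⊕ {p : P // p ∉ Set.range gP}

section Amalgam

variable {M N P : Type u} [LE.Structure M] [LE.Structure N] [LE.Structure P]
  (gN : M ↪[LE] N) (gP : M ↪[LE] P)

open Classical in
noncomputable def amalgamInr (p : P) : Amalgam N gP :=
  if h : p ∈ Set.range gP then .inl (gN h.choose) else .inr ⟨p, h⟩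

lemma amalgamInr_apply (m : M) : amalgamInr gN gP (gP m) = .inl (gN m) := by
  have h : gP m ∈ Set.range gP := ⟨m, rfl⟩
  rw [amalgamInr, dif_pos h, gP.injective h.choose_spec]

lemma amalgamInr_injective : Function.Injective (amalgamInr gN gP) := by
  intro p q hpq
  by_cases hp : p ∈ Set.range gP <;> by_cases hq : q ∈ Set.range gP <;>
    simp only [amalgamInr, hp, hq, dif_pos, dif_neg, not_false_eq_true, reduceCtorEq,
      Sum.inl.injEq, Sum.inr.injEq, Subtype.mk.injEq] at hpq
  · rw [← hp.choose_spec, ← hq.choose_spec, gN.injective hpq]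
  · exact hpq

lemma eq_of_amalgamInr_comp_eq_inl_comp {n : ℕ} {b : Fin n → P} {a : Fin n → N}
    (h : amalgamInr gN gP ∘ b = Sum.inl ∘ a) : ∃ m : Fin n → M, gP ∘ m = b ∧ gN ∘ m = a := by
  have hi (i : Fin n) : ∃ m, gP m = b i ∧ gN m = a i := by
    have hbi := congrFun h i
    by_cases hb : b i ∈ Set.range gP
    · obtain ⟨m, hm⟩ := hb
      rw [Function.comp_apply, ← hm, amalgamInr_apply] at hbi
      exact ⟨m, hm, Sum.inl_injective hbi⟩
    · simp [amalgamInr, hb] at hbi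
  choose m hm using hi
  exact ⟨m, funext fun i => (hm i).1, funext fun i => (hm i).2⟩

open Classical in
noncomputable def pLabel (n : ℕ) (b : Fin (pp n) → P) :
    Set (Fin (pp n) → N) ⊕ Set (Fin (pp n) → P) :=
  if h : ∃ m, EErel n b (gP ∘ m) then .inl (eclass n (gN ∘ h.choose)) else .inr (eclass n b)

variable {gN gP} {n : ℕ} (hN : EGood N n) (hP : EGood P n)
include hN hP

lemma pLabel_of_rel {b : Fin (pp n) → P} {m : Fin (pp n) → M} (hm : EErel n b (gP ∘ m)) :
    pLabel gN gP n b = .inl (eclass n (gN ∘ m)) := by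
  have h : ∃ m, EErel n b (gP ∘ m) := ⟨m, hm⟩
  rw [pLabel, dif_pos h, Sum.inl.injEq, hN.eclass_eq_iff, EErel_embedding_comp_iff gN,
    ← EErel_embedding_comp_iff gP]
  exact hP.trans _ _ _ (hP.symm _ _ h.choose_spec) hm

lemma pLabel_eq_iff (b b' : Fin (pp n) → P) :
    pLabel gN gP n b = pLabel gN gP n b' ↔ EErel n b b' := by
  by_cases hb : ∃ m, EErel n b (gP ∘ m) <;> by_cases hb' : ∃ m', EErel n b' (gP ∘ m')
  · obtain ⟨⟨m, hm⟩, ⟨m', hm'⟩⟩ := And.intro hb hb'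
    rw [pLabel_of_rel hN hP hm, pLabel_of_rel hN hP hm', Sum.inl.injEq, hN.eclass_eq_iff,
      EErel_embedding_comp_iff gN, ← EErel_embedding_comp_iff gP, hP.rel_congr hm hm']
  · obtain ⟨m, hm⟩ := hb
    rw [pLabel_of_rel hN hP hm, pLabel, dif_neg hb']
    simp only [reduceCtorEq, false_iff]
    exact fun hbb' => hb' ⟨m, hP.trans _ _ _ (hP.symm _ _ hbb') hm⟩
  · obtain ⟨m', hm'⟩ := hb'
    rw [pLabel_of_rel hN hP hm', pLabel, dif_neg hb]
    simp only [reduceCtorEq, false_iff]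
    exact fun hbb' => hb ⟨m', hP.trans _ _ _ hbb' hm'⟩
  · rw [pLabel, pLabel, dif_neg hb, dif_neg hb', Sum.inr.injEq, hP.eclass_eq_iff]

omit hN hP

-- Injective tuples with the same range are permutations of each other, so `Set.range` labels
-- the classes of the tuples lying neither in `N` nor in `P`.
variable (gN gP) in
noncomputable def amalgamLabel (n : ℕ) (x : Fin (pp n) → Amalgam N gP) :
    (Set (Fin (pp n) → N) ⊕ Set (Fin (pp n) → P)) ⊕ Set (Amalgam N gP) :=
  match Function.partialInv (amalgamInr gN gP ∘ ·) x, Function.partialInv (Sum.inl ∘ ·) x with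
  | some b, _ => .inl (pLabel gN gP n b)
  | none, some a => .inl (.inl (eclass n a))
  | none, none => .inr (Set.range x)

lemma amalgamLabel_amalgamInr_comp (b : Fin (pp n) → P) :
    amalgamLabel gN gP n (amalgamInr gN gP ∘ b) = .inl (pLabel gN gP n b) := by
  simp only [amalgamLabel, partialInv_comp_left_comp (amalgamInr_injective gN gP)]

include hN hP in
lemma amalgamLabel_inl_comp (a : Fin (pp n) → N) :
    amalgamLabel gN gP n (Sum.inl ∘ a) = .inl (.inl (eclass n a)) := by
  cases h : Function.partialInv (amalgamInr gN gP ∘ ·) (Sum.inl ∘ a) with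
  | none => simp only [amalgamLabel, h, partialInv_comp_left_comp Sum.inl_injective]
  | some b =>
    obtain ⟨m, rfl, rfl⟩ := eq_of_amalgamInr_comp_eq_inl_comp gN gP
      ((((amalgamInr_injective gN gP).comp_left (α := Fin (pp n))).isPartialInv _ _).1 h)
    simp only [amalgamLabel, h, pLabel_of_rel hN hP (hP.refl _)]

include hN hP in
lemma amalgamLabel_comp_perm (x : Fin (pp n) → Amalgam N gP) (σ : Equiv.Perm (Fin (pp n))) :
    amalgamLabel gN gP n (x ∘ σ) = amalgamLabel gN gP n x := by
  simp only [amalgamLabel,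
    partialInv_comp_left_comp_equiv (amalgamInr_injective gN gP) σ x,
    partialInv_comp_left_comp_equiv Sum.inl_injective σ x]
  rcases Function.partialInv (amalgamInr gN gP ∘ ·) x with _ | b <;>
    rcases Function.partialInv (Sum.inl ∘ ·) x with _ | a
  · simp only [Option.map_none, EquivLike.range_comp]
  · simp only [Option.map_none, Option.map_some, Sum.inl.injEq, hN.eclass_eq_iff,
      hN.rel_comp_perm]
  all_goals simp only [Option.map_some, Sum.inl.injEq, pLabel_eq_iff hN hP, hP.rel_comp_perm]

variable (gN gP) in
noncomputable def amalgamStructure : LE.Structure (Amalgam N gP) :=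
  structureOfRel fun n => labelRel (amalgamLabel gN gP n)

end Amalgam

theorem amalgamation_CEclass : Amalgamation CEclass.{u} := by
  rintro M N P gN gP - ⟨_, hN⟩ ⟨_, hP⟩
  let := amalgamStructure gN gP
  have hQ n := structureOfRel_EErel (fun n => labelRel (amalgamLabel gN gP n)) n
  refine ⟨⟨Amalgam N gP, amalgamStructure gN gP⟩,
    embeddingOfLabel hQ hN Sum.inl Sum.inl_injective fun n x y => ?_,
    embeddingOfLabel hQ hP (amalgamInr gN gP) (amalgamInr_injective gN gP) fun n x y => ?_,
    ⟨inferInstance, fun n => EGood.of_labelRel (hQ n) (amalgamLabel_comp_perm (hN n) (hP n))⟩,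
    Embedding.ext fun m => (amalgamInr_apply gN gP m).symm⟩
  · rw [amalgamLabel_inl_comp (hN n) (hP n), amalgamLabel_inl_comp (hN n) (hP n), Sum.inl.injEq,
      Sum.inl.injEq, (hN n).eclass_eq_iff]
  · rw [amalgamLabel_amalgamInr_comp, amalgamLabel_amalgamInr_comp, Sum.inl.injEq,
      pLabel_eq_iff (hN n) (hP n)]

theorem jointEmbedding_CEclass : JointEmbedding CEclass.{u} := by
  intro N hN P hP
  obtain ⟨Q, NQ, PQ, hQ, -⟩ := amalgamation_CEclass ⟨(∅ : Set N), inducedStrE ∅⟩ N P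
    (@embeddingOfIsEmpty _ _ (inducedStrE ∅) _ _) (@embeddingOfIsEmpty _ _ (inducedStrE ∅) _ _)
    (inducedStrE_mem_CEclass hN ∅) hN hP
  exact ⟨Q, hQ, ⟨NQ⟩, ⟨PQ⟩⟩

/-- The class `C_E` is closed under induced substructures and has both the
joint embedding property and the amalgamation property. -/
theorem statement_16 :
    (∀ M ∈ CEclass.{u}, ∀ A : Set M,
      (⟨Set.Elem A, inducedStrE A⟩ : Bundled.{u} LE.Structure) ∈ CEclass.{u}) ∧
    JointEmbedding CEclass.{u} ∧ Amalgamation CEclass.{u} :=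
  ⟨fun _ hM A => inducedStrE_mem_CEclass hM A, jointEmbedding_CEclass, amalgamation_CEclass⟩

end Ivanov
end
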